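/- Let Φ = (G, φ) be a T-gain graph on a connected bipartite graph G. Then Φ is distance compatible if and only if Φ is balanced. -/

import Mathlib

open Matrix
open scoped Classical

noncomputable section

namespace GG

variable {V : Type*}

/-- The gain of a walk: product of the gains of its oriented edges. -/
def walkGain {G : SimpleGraph V} (φ : V → V → ℂ) {u v : V} (p : G.Walk u v) : ℂ :=
  (p.darts.map (fun d => φ d.toProd.1 d.toProd.2)).prod

/-- `φ` is a `𝕋`-gain function on `G`: unit modulus on edges, inverse under reversal. -/
def IsGain (G : SimpleGraph V) (φ : V → V → ℂ) : Prop :=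
  (∀ i j, G.Adj i j → ‖φ i j‖ = 1) ∧ (∀ i j, G.Adj i j → φ j i = (φ i j)⁻¹)

/-- Adjacency matrix of a gain graph. -/
def gainAdj [Fintype V] [DecidableEq V] (G : SimpleGraph V) (φ : V → V → ℂ) :
    Matrix V V ℂ := fun i j => if G.Adj i j then φ i j else 0

/-- A gain graph is balanced if every cycle has gain 1. -/
def GBalanced (G : SimpleGraph V) (φ : V → V → ℂ) : Prop :=
  ∀ (u : V) (c : G.Walk u u), c.IsCycle → walkGain φ c = 1

/-- All shortest paths between any pair of vertices have the same gain. -/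
def DistCompatible (G : SimpleGraph V) (φ : V → V → ℂ) : Prop :=
  ∀ (s t : V) (p q : G.Walk s t), p.length = G.dist s t → q.length = G.dist s t →
    walkGain φ p = walkGain φ q

/-- The set of gains of shortest `s`-`t` paths. -/
def shortestGains (G : SimpleGraph V) (φ : V → V → ℂ) (s t : V) : Set ℂ :=
  {z | ∃ p : G.Walk s t, p.length = G.dist s t ∧ walkGain φ p = z}

/-- The element of `S` maximizing the real part, ties broken by maximal imaginary part
(correct for finite nonempty sets of gains). -/
def lexMaxGain (S : Set ℂ) : ℂ :=
  ⟨sSup (Complex.re '' S), sSup (Complex.im '' {z ∈ S | z.re = sSup (Complex.re '' S)})⟩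

/-- The element of `S` minimizing the real part, ties broken by minimal imaginary part. -/
def lexMinGain (S : Set ℂ) : ℂ :=
  ⟨sInf (Complex.re '' S), sInf (Complex.im '' {z ∈ S | z.re = sInf (Complex.re '' S)})⟩

/-- The maximum gain distance matrix `D^max_<(Φ)` with respect to a strict order `lt`. -/
def Dmax [Fintype V] [DecidableEq V] (G : SimpleGraph V) (φ : V → V → ℂ)
    (lt : V → V → Prop) : Matrix V V ℂ := fun s t =>
  if lt s t then lexMaxGain (shortestGains G φ s t) * (G.dist s t : ℂ)
  else if lt t s then (starRingEnd ℂ) (lexMaxGain (shortestGains G φ t s)) * (G.dist s t : ℂ)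
  else 0

/-- The minimum gain distance matrix `D^min_<(Φ)` with respect to a strict order `lt`. -/
def Dmin [Fintype V] [DecidableEq V] (G : SimpleGraph V) (φ : V → V → ℂ)
    (lt : V → V → Prop) : Matrix V V ℂ := fun s t =>
  if lt s t then lexMinGain (shortestGains G φ s t) * (G.dist s t : ℂ)
  else if lt t s then (starRingEnd ℂ) (lexMinGain (shortestGains G φ t s)) * (G.dist s t : ℂ)
  else 0

/-- Vertex order independence: the gain distance matrices agree for the standard order
and its reverse. -/
def OrderIndependent [Fintype V] [DecidableEq V] [LinearOrder V] (G : SimpleGraph V)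
    (φ : V → V → ℂ) : Prop :=
  Dmax G φ (· < ·) = Dmax G φ (fun a b => b < a) ∧
  Dmin G φ (· < ·) = Dmin G φ (fun a b => b < a)

/-- The largest (real) eigenvalue of a matrix. -/
def maxEig [Fintype V] [DecidableEq V] (A : Matrix V V ℂ) : ℝ :=
  sSup {r : ℝ | (r : ℂ) ∈ spectrum ℂ A}

/-- The spectral radius of a matrix. -/
def specRad [Fintype V] [DecidableEq V] (A : Matrix V V ℂ) : ℝ :=
  sSup {r : ℝ | ∃ z ∈ spectrum ℂ A, ‖z‖ = r}

/-- The distance matrix of the underlying graph, as a complex matrix. -/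
def distMatrix [Fintype V] [DecidableEq V] (G : SimpleGraph V) : Matrix V V ℂ :=
  fun i j => (G.dist i j : ℂ)

/-- Weighted gain adjacency matrix `A(Φ_w)`. -/
def wGainAdj [Fintype V] [DecidableEq V] (G : SimpleGraph V) (φ : V → V → ℂ)
    (w : V → V → ℝ) : Matrix V V ℂ := fun i j => if G.Adj i j then φ i j * (w i j : ℂ) else 0

/-- Weighted adjacency matrix `A(G_w)` of the underlying weighted graph. -/
def wAdj [Fintype V] [DecidableEq V] (G : SimpleGraph V) (w : V → V → ℝ) :
    Matrix V V ℂ := fun i j => if G.Adj i j then (w i j : ℂ) else 0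

/-! In a balanced gain graph every closed walk has gain 1, since shortening a walk to a path
(`Walk.bypass`) only removes closed subwalks `u → x ⇝ u` whose gain is that of a cycle or of a
backtrack; hence all walks with the same ends have the same gain. Conversely, fix a root `r` and
let `θ v` be the common gain of the shortest `r`-`v` paths. In a bipartite graph the distances
from `r` of adjacent vertices differ by exactly one, so each edge `ab` extends a shortest path to
one end into a shortest path to the other, and `θ a * φ a b = θ b`. Along any walk the gain then
telescopes to `(θ u)⁻¹ * θ v`, so closed walks have gain 1. -/

section GainGraph

open SimpleGraph

variable {G : SimpleGraph V} {φ : V → V → ℂ}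

@[simp] lemma walkGain_nil {u : V} : walkGain φ (Walk.nil : G.Walk u u) = 1 := rfl

@[simp] lemma walkGain_cons {u v w : V} (h : G.Adj u v) (p : G.Walk v w) :
    walkGain φ (Walk.cons h p) = φ u v * walkGain φ p := by
  simp [walkGain]

@[simp] lemma walkGain_append {u v w : V} (p : G.Walk u v) (q : G.Walk v w) :
    walkGain φ (p.append q) = walkGain φ p * walkGain φ q := by
  simp [walkGain, Walk.darts_append]

@[simp] lemma walkGain_concat {u v w : V} (p : G.Walk u v) (h : G.Adj v w) :
    walkGain φ (p.concat h) = walkGain φ p * φ v w := by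
  simp [Walk.concat_eq_append]

lemma IsGain.ne_zero (hφ : IsGain G φ) {u v : V} (h : G.Adj u v) : φ u v ≠ 0 :=
  norm_ne_zero_iff.mp (by simp [hφ.1 u v h])

lemma IsGain.walkGain_ne_zero (hφ : IsGain G φ) {u v : V} (p : G.Walk u v) :
    walkGain φ p ≠ 0 := by
  induction p with
  | nil => exact one_ne_zero
  | cons h p ih => simpa using mul_ne_zero (hφ.ne_zero h) ih

lemma IsGain.mul_reverse_eq_one (hφ : IsGain G φ) {u v : V} (h : G.Adj u v) :
    φ u v * φ v u = 1 := by
  rw [hφ.2 u v h, mul_inv_cancel₀ (hφ.ne_zero h)]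

lemma GBalanced.walkGain_cons_of_isPath (hb : GBalanced G φ) (hφ : IsGain G φ) {u v : V}
    (h : G.Adj u v) {p : G.Walk v u} (hp : p.IsPath) : walkGain φ (Walk.cons h p) = 1 := by
  by_cases he : s(v, u) ∈ p.edges
  · rw [hp.eq_adj_toWalk_of_mem_edges he]
    simpa using hφ.mul_reverse_eq_one h
  · exact hb u _ ((Walk.cons_isCycle_iff p h).2 ⟨hp, by rwa [Sym2.eq_swap]⟩)

lemma GBalanced.walkGain_bypass (hb : GBalanced G φ) (hφ : IsGain G φ) {u v : V}
    (p : G.Walk u v) : walkGain φ p.bypass = walkGain φ p := by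
  induction p with
  | nil => rfl
  | @cons u x v h p ih =>
    rw [walkGain_cons, ← ih, Walk.bypass]
    split_ifs with hu
    · conv_rhs => rw [← p.bypass.take_spec hu, walkGain_append, ← mul_assoc, ← walkGain_cons h,
        hb.walkGain_cons_of_isPath hφ h (p.bypass_isPath.takeUntil hu), one_mul]
    · exact walkGain_cons h _

lemma GBalanced.walkGain_eq_one (hb : GBalanced G φ) (hφ : IsGain G φ) {u : V}
    (c : G.Walk u u) : walkGain φ c = 1 := by
  rw [← hb.walkGain_bypass hφ, (Walk.isPath_iff_nil.mp c.bypass_isPath).eq_nil, walkGain_nil]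

lemma GBalanced.walkGain_eq (hb : GBalanced G φ) (hφ : IsGain G φ) {u v : V}
    (p q : G.Walk u v) : walkGain φ p = walkGain φ q := by
  have hp := hb.walkGain_eq_one hφ (p.append q.reverse)
  have hq := hb.walkGain_eq_one hφ (q.append q.reverse)
  rw [walkGain_append] at hp hq
  exact mul_right_cancel₀ (right_ne_zero_of_mul_eq_one hq) (hp.trans hq.symm)

lemma GBalanced.distCompatible (hb : GBalanced G φ) (hφ : IsGain G φ) : DistCompatible G φ :=
  fun _ _ p q _ _ => hb.walkGain_eq hφ p q

lemma mul_walkGain_eq_of_potential {θ : V → ℂ} (hθ : ∀ a b, G.Adj a b → θ a * φ a b = θ b)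
    {u v : V} (p : G.Walk u v) : θ u * walkGain φ p = θ v := by
  induction p with
  | nil => simp
  | @cons u x v h p ih => rw [walkGain_cons, ← mul_assoc, hθ u x h, ih]

lemma gBalanced_of_potential {θ : V → ℂ} (hθ₀ : ∀ v, θ v ≠ 0)
    (hθ : ∀ a b, G.Adj a b → θ a * φ a b = θ b) : GBalanced G φ :=
  fun u c _ => (mul_eq_left₀ (hθ₀ u)).mp (mul_walkGain_eq_of_potential hθ c)

lemma _root_.SimpleGraph.Reachable.dist_eq_add_one_or_of_adj (hbip : G.Colorable 2) {u v w : V}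
    (hr : G.Reachable u v) (h : G.Adj v w) :
    G.dist u w = G.dist u v + 1 ∨ G.dist u v = G.dist u w + 1 := by
  obtain ⟨p, hp⟩ := hr.exists_walk_length_eq_dist
  obtain ⟨q, hq⟩ := (hr.trans h.reachable).exists_walk_length_eq_dist
  have heven := two_colorable_iff_forall_loop_even.mp hbip u ((p.concat h).append q.reverse)
  rw [Walk.length_append, Walk.length_concat, Walk.length_reverse, hp, hq, Nat.even_iff] at heven
  rcases h.diff_dist_adj (u := u) with _ | _ | _ <;> omega

lemma DistCompatible.exists_potential (hdc : DistCompatible G φ) (hφ : IsGain G φ)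
    (hconn : G.Connected) (hbip : G.Colorable 2) :
    ∃ θ : V → ℂ, (∀ v, θ v ≠ 0) ∧ ∀ a b, G.Adj a b → θ a * φ a b = θ b := by
  obtain ⟨r⟩ := hconn.nonempty
  choose sp hsp using fun v => hconn.exists_walk_length_eq_dist r v
  have outward : ∀ a b, G.Adj a b → G.dist r b = G.dist r a + 1 →
      walkGain φ (sp a) * φ a b = walkGain φ (sp b) := fun a b hab hd => by
    rw [← walkGain_concat (sp a) hab]
    exact hdc r b _ _ (by rw [Walk.length_concat, hsp, hd]) (hsp b)
  refine ⟨fun v => walkGain φ (sp v), fun v => hφ.walkGain_ne_zero (sp v), fun a b hab => ?_⟩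
  rcases Reachable.dist_eq_add_one_or_of_adj hbip (hconn r a) hab with hd | hd
  · exact outward a b hab hd
  · show walkGain φ (sp a) * φ a b = walkGain φ (sp b)
    rw [← outward b a hab.symm hd, hφ.2 b a hab.symm,
      mul_inv_cancel_right₀ (hφ.ne_zero hab.symm)]

end GainGraph

/-- a gain graph on a connected bipartite graph is distance compatible iff it
is balanced. -/
theorem bipartite_distCompatible_iff_balanced {V : Type*} (G : SimpleGraph V)
    (hconn : G.Connected) (hbip : G.Colorable 2) (φ : V → V → ℂ) (hφ : IsGain G φ) :
    DistCompatible G φ ↔ GBalanced G φ := by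
  refine ⟨fun hdc => ?_, fun hb => hb.distCompatible hφ⟩
  obtain ⟨θ, hθ₀, hθ⟩ := hdc.exists_potential hφ hconn hbip
  exact gBalanced_of_potential hθ₀ hθ

end GG
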